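/- arXiv:2201.07471 — 2 statements merged into one kernel-verified Lean document; each statement's English description precedes it below -/
import Mathlib

section
/- Let M be an n×n symmetric positive definite real matrix, K an n×n symmetric positive semidefinite real matrix, Δt > 0, ν ≥ 0, a₀ ≥ 0, and let K̂ = M/Δt + νK + a₀M. Let E₁ be the N×N subdiagonal shift matrix and define the block matrix 𝒦 = I_N ⊗ K̂ − E₁ ⊗ (M/Δt). Then 𝒦 + 𝒦ᵀ is positive definite. -/
open Matrix
open Kronecker

/-!
By symmetry of `M` and `K`, `𝒦 + 𝒦ᵀ = (2I − E₁ − E₁ᵀ) ⊗ (M/Δt) + I ⊗ 2(νK + a₀M)`. The second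
summand is positive semidefinite. In the first, `2I − E₁ − E₁ᵀ = DᵀD` for the `(N+1) × N` backward
difference matrix `D`, whose top `N × N` block `I − E₁` is unit lower triangular; so `D` is
injective, `DᵀD` is positive definite, and so is its Kronecker product with `M/Δt`.
-/

/-- `(D x)ₖ = xₖ − xₖ₋₁` for `k = 0, …, N`, with `x₋₁ = x_N = 0`. -/
def backwardDifference (R : Type*) [CommRing R] (N : ℕ) : Matrix (Fin (N + 1)) (Fin N) R :=
  of fun k j => (if (k : ℕ) = j then 1 else 0) - (if (k : ℕ) = j + 1 then 1 else 0)

variable {R : Type*} [CommRing R]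

lemma det_backwardDifference_submatrix_castSucc (N : ℕ) :
    ((backwardDifference R N).submatrix Fin.castSucc id).det = 1 := by
  rw [det_of_isLowerTriangular]
  · simp [backwardDifference]
  · intro i j hij
    have hij : (i : ℕ) < j := hij
    simp [backwardDifference, hij.ne, show (i : ℕ) ≠ j + 1 by omega]

lemma backwardDifference_mulVec_injective (N : ℕ) :
    Function.Injective (backwardDifference R N).mulVec := by
  intro x y hxy
  have hdet : IsUnit ((backwardDifference R N).submatrix Fin.castSucc id).det := by
    simp [det_backwardDifference_submatrix_castSucc]
  exact mulVec_injective_of_isUnit ((isUnit_iff_isUnit_det _).2 hdet)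
    (funext fun i => congrFun hxy i.castSucc)

lemma backwardDifference_transpose_mul_self {N : ℕ} {E : Matrix (Fin N) (Fin N) R}
    (hE : ∀ i j : Fin N, E i j = if (i : ℕ) = (j : ℕ) + 1 then 1 else 0) :
    (backwardDifference R N)ᵀ * backwardDifference R N = (2 : R) • 1 - E - Eᵀ := by
  ext i j
  simp only [mul_apply, transpose_apply, backwardDifference, of_apply, Matrix.sub_apply,
    Matrix.smul_apply, one_apply, hE, smul_eq_mul]
  rw [Fin.sum_univ_eq_sum_range (fun k =>
    ((if k = (i : ℕ) then (1 : R) else 0) - (if k = (i : ℕ) + 1 then 1 else 0)) *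
    ((if k = (j : ℕ) then (1 : R) else 0) - (if k = (j : ℕ) + 1 then 1 else 0)))]
  simp only [mul_sub, mul_ite, mul_one, mul_zero, Finset.sum_sub_distrib, Finset.sum_ite_eq',
    Finset.mem_range]
  have := i.isLt
  have := j.isLt
  split_ifs <;> first | ring1 | omega

lemma posDef_two_smul_one_sub_sub_transpose {N : ℕ} {E : Matrix (Fin N) (Fin N) ℝ}
    (hE : ∀ i j : Fin N, E i j = if (i : ℕ) = (j : ℕ) + 1 then 1 else 0) :
    ((2 : ℝ) • 1 - E - Eᵀ).PosDef := by
  rw [← backwardDifference_transpose_mul_self hE, ← conjTranspose_eq_transpose_of_trivial]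
  exact .conjTranspose_mul_self _ (backwardDifference_mulVec_injective N)

lemma one_kronecker_sub_add_transpose {m n : Type*} [DecidableEq m]
    {A P : Matrix n n R} (hA : A.IsSymm) (hP : P.IsSymm) (E : Matrix m m R) :
    (1 ⊗ₖ A - E ⊗ₖ P) + (1 ⊗ₖ A - E ⊗ₖ P)ᵀ =
      ((2 : R) • 1 - E - Eᵀ) ⊗ₖ P + 1 ⊗ₖ ((2 : R) • (A - P)) := by
  ext ⟨i, k⟩ ⟨j, l⟩
  simp only [Matrix.add_apply, Matrix.sub_apply, transpose_apply, kroneckerMap_apply,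
    Matrix.smul_apply, smul_eq_mul, hA.apply, hP.apply, one_apply, eq_comm (a := j)]
  ring

theorem stmt_9_general (n N : ℕ)
    (M K : Matrix (Fin n) (Fin n) ℝ) (hM : M.PosDef) (hK : K.PosSemidef)
    (Δt ν a₀ : ℝ) (hΔt : 0 < Δt) (hν : 0 ≤ ν) (ha₀ : 0 ≤ a₀)
    (E₁ : Matrix (Fin N) (Fin N) ℝ)
    (hE : ∀ i j : Fin N, E₁ i j = if (i : ℕ) = (j : ℕ) + 1 then 1 else 0) :
    letI Khat : Matrix (Fin n) (Fin n) ℝ := Δt⁻¹ • M + ν • K + a₀ • M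
    letI 𝒦 : Matrix (Fin N × Fin n) (Fin N × Fin n) ℝ :=
      (1 : Matrix (Fin N) (Fin N) ℝ) ⊗ₖ Khat - E₁ ⊗ₖ (Δt⁻¹ • M)
    (𝒦 + 𝒦ᵀ).PosDef := by
  have hMsymm : M.IsSymm := isHermitian_iff_isSymm.1 hM.isHermitian
  have hKsymm : K.IsSymm := isHermitian_iff_isSymm.1 hK.isHermitian
  have hKhat_sub : Δt⁻¹ • M + ν • K + a₀ • M - Δt⁻¹ • M = ν • K + a₀ • M := by abel
  show (_ + _ : Matrix _ _ ℝ).PosDef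
  rw [one_kronecker_sub_add_transpose (((hMsymm.smul _).add (hKsymm.smul _)).add (hMsymm.smul _))
    (hMsymm.smul _), hKhat_sub]
  exact ((posDef_two_smul_one_sub_sub_transpose hE).kronecker
      (hM.smul (inv_pos.2 hΔt))).add_posSemidef
    (PosSemidef.one.kronecker (((hK.smul hν).add (hM.posSemidef.smul ha₀)).smul zero_le_two))

theorem stmt_9 (n N : ℕ) (hN : 1 ≤ N)
    (M K : Matrix (Fin n) (Fin n) ℝ) (hM : M.PosDef) (hK : K.PosSemidef)
    (Δt ν a₀ : ℝ) (hΔt : 0 < Δt) (hν : 0 ≤ ν) (ha₀ : 0 ≤ a₀)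
    (E₁ : Matrix (Fin N) (Fin N) ℝ)
    (hE : ∀ i j : Fin N, E₁ i j = if (i : ℕ) = (j : ℕ) + 1 then 1 else 0) :
    letI Khat : Matrix (Fin n) (Fin n) ℝ := Δt⁻¹ • M + ν • K + a₀ • M
    letI 𝒦 : Matrix (Fin N × Fin n) (Fin N × Fin n) ℝ :=
      (1 : Matrix (Fin N) (Fin N) ℝ) ⊗ₖ Khat - E₁ ⊗ₖ (Δt⁻¹ • M)
    (𝒦 + 𝒦ᵀ).PosDef :=
  stmt_9_general n N M K hM hK Δt ν a₀ hΔt hν ha₀ E₁ hE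
end

section
/- Let A be an n×n real matrix such that A + Aᵀ is positive definite, let D be an n×n diagonal matrix with nonnegative entries, and let T : ℝⁿ → ℝⁿ be a map of the form T(p) = D·P(p) + A·p, where P : ℝⁿ → ℝⁿ acts componentwise by P(p)_i = min(b, max(a, p_i/γ)) with γ > 0 and a ≤ b. Then T is strictly monotone, i.e., ⟨T(p) − T(q), p − q⟩ > 0 for all p ≠ q; consequently the equation T(p) = c has at most one solution for each c ∈ ℝⁿ. -/
/-!
With `x = p - q`, `⟪T p - T q, x⟫` is the sum of `Σ dᵢ (P(p)ᵢ - P(q)ᵢ) xᵢ`, nonnegative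
because the clamp `P` is monotone, and of `⟪A x, x⟫ = ½ ⟪(A + Aᵀ) x, x⟫ > 0`.
Strict monotonicity then forces injectivity.
-/

open Matrix

theorem Monotone.sub_mul_sub_nonneg {f : ℝ → ℝ} (hf : Monotone f) (x y : ℝ) :
    0 ≤ (f x - f y) * (x - y) := by
  rcases le_total x y with hxy | hyx
  · exact mul_nonneg_of_nonpos_of_nonpos (sub_nonpos.mpr (hf hxy)) (sub_nonpos.mpr hxy)
  · exact mul_nonneg (sub_nonneg.mpr (hf hyx)) (sub_nonneg.mpr hyx)

section

variable {ι : Type*} [Fintype ι]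

theorem Matrix.dotProduct_mulVec_pos_of_posDef_add_transpose {A : Matrix ι ι ℝ}
    (hA : (A + Aᵀ).PosDef) {x : ι → ℝ} (hx : x ≠ 0) : 0 < A *ᵥ x ⬝ᵥ x := by
  have hpos : 0 < x ⬝ᵥ (A + Aᵀ) *ᵥ x := by
    simpa only [star_trivial] using hA.dotProduct_mulVec_pos hx
  have htranspose : x ⬝ᵥ Aᵀ *ᵥ x = A *ᵥ x ⬝ᵥ x := by
    rw [mulVec_transpose, dotProduct_comm x, ← dotProduct_mulVec, dotProduct_comm x]
  rw [add_mulVec, dotProduct_add, htranspose, dotProduct_comm] at hpos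
  linarith

theorem Matrix.diagonal_mulVec_comp_sub_dotProduct_nonneg [DecidableEq ι] {d : ι → ℝ}
    (hd : ∀ i, 0 ≤ d i) {f : ℝ → ℝ} (hf : Monotone f) (p q : ι → ℝ) :
    0 ≤ (diagonal d *ᵥ (fun i => f (p i)) - diagonal d *ᵥ (fun i => f (q i))) ⬝ᵥ (p - q) := by
  rw [← mulVec_sub]
  refine Finset.sum_nonneg fun i _ => ?_
  rw [mulVec_diagonal, Pi.sub_apply, mul_assoc]
  exact mul_nonneg (hd i) (hf.sub_mul_sub_nonneg (p i) (q i))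

theorem injective_of_dotProduct_sub_pos {T : (ι → ℝ) → (ι → ℝ)}
    (hT : ∀ p q, p ≠ q → 0 < (T p - T q) ⬝ᵥ (p - q)) : Function.Injective T := by
  intro p q hpq
  by_contra hne
  simpa [hpq] using hT p q hne

end

theorem monotone_clamp_div {γ : ℝ} (hγ : 0 ≤ γ) (a b : ℝ) :
    Monotone fun x : ℝ => min b (max a (x / γ)) :=
  fun _ _ hxy => min_le_min le_rfl (max_le_max le_rfl (by gcongr))

theorem stmt_17_general (n : ℕ) (A : Matrix (Fin n) (Fin n) ℝ)
    (hA : (A + Aᵀ).PosDef)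
    (d : Fin n → ℝ) (hd : ∀ i, 0 ≤ d i)
    (γ a b : ℝ) (hγ : 0 < γ)
    (T : (Fin n → ℝ) → (Fin n → ℝ))
    (hT : ∀ p, T p = (Matrix.diagonal d).mulVec (fun i => min b (max a (p i / γ)))
        + A.mulVec p) :
    (∀ p q : Fin n → ℝ, p ≠ q → 0 < (T p - T q) ⬝ᵥ (p - q)) ∧
    ∀ (c : Fin n → ℝ) (p q : Fin n → ℝ), T p = c → T q = c → p = q := by
  have hmono : ∀ p q : Fin n → ℝ, p ≠ q → 0 < (T p - T q) ⬝ᵥ (p - q) := by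
    intro p q hpq
    have hsplit : T p - T q = (diagonal d *ᵥ (fun i => min b (max a (p i / γ)))
        - diagonal d *ᵥ (fun i => min b (max a (q i / γ)))) + A *ᵥ (p - q) := by
      rw [hT, hT, mulVec_sub]
      abel
    rw [hsplit, add_dotProduct]
    exact add_pos_of_nonneg_of_pos
      (diagonal_mulVec_comp_sub_dotProduct_nonneg hd (monotone_clamp_div hγ.le a b) p q)
      (dotProduct_mulVec_pos_of_posDef_add_transpose hA (sub_ne_zero.mpr hpq))
  exact ⟨hmono, fun c p q hp hq => injective_of_dotProduct_sub_pos hmono (hp.trans hq.symm)⟩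

theorem stmt_17 (n : ℕ) (A : Matrix (Fin n) (Fin n) ℝ)
    (hA : (A + Aᵀ).PosDef)
    (d : Fin n → ℝ) (hd : ∀ i, 0 ≤ d i)
    (γ a b : ℝ) (hγ : 0 < γ) (hab : a ≤ b)
    (T : (Fin n → ℝ) → (Fin n → ℝ))
    (hT : ∀ p, T p = (Matrix.diagonal d).mulVec (fun i => min b (max a (p i / γ)))
        + A.mulVec p) :
    (∀ p q : Fin n → ℝ, p ≠ q → 0 < (T p - T q) ⬝ᵥ (p - q)) ∧
    ∀ (c : Fin n → ℝ) (p q : Fin n → ℝ), T p = c → T q = c → p = q :=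
  stmt_17_general n A hA d hd γ a b hγ T hT
end
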